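/- Fix reals θ > 0, η > 0, V > 0, ξ > 0, Q > 0 and E_b ≥ 0, define F(R) = V·ξ·max(η(e^{θR} − 1) − E_b, 0) − Q·R, R_th = (1/θ)·ln(E_b/η + 1) and R_s = (1/θ)·ln(Q/(θ·V·η·ξ)). If R_s < R_th < Q, then for every R ∈ [0, Q] one has F(R) ≥ F(R_th) = −Q·R_th; that is, R_th minimizes F over [0, Q]. -/

import Mathlib

/-!
At `R_th` the battery covers exactly the energy `η (e^{θR} - 1)`, so the hinge term vanishes and
`F(R_th) = -Q R_th`. Below `R_th` the hinge is nonnegative and `-Q R` only grows as `R` decreases.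
Above `R_th`, the tangent line of the convex map `R ↦ η (e^{θR} - 1) - E_b` at `R_th` has slope
`θ (E_b + η)`, and `R_s < R_th` says precisely that the marginal grid cost `V ξ θ (E_b + η)`
exceeds the marginal gain `Q`.
-/

open Real

theorem neg_mul_le_mul_max_sub_mul {c Q s R₀ R y : ℝ} (hc : 0 ≤ c) (hQ : 0 ≤ Q)
    (hQs : Q ≤ c * s) (hy : s * (R - R₀) ≤ y) : -(Q * R₀) ≤ c * max y 0 - Q * R := by
  have hhinge : 0 ≤ c * max y 0 := mul_nonneg hc (le_max_right y 0)
  rcases le_or_gt R R₀ with hle | hgt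
  · nlinarith
  · have : c * y ≤ c * max y 0 := mul_le_mul_of_nonneg_left (le_max_left y 0) hc
    nlinarith [mul_le_mul_of_nonneg_left hy hc, mul_le_mul_of_nonneg_right hQs (sub_pos.2 hgt).le]

theorem Real.exp_mul_sub_add_one_le_exp (a b : ℝ) : exp a * (b - a + 1) ≤ exp b := by
  calc exp a * (b - a + 1) ≤ exp a * exp (b - a) :=
        mul_le_mul_of_nonneg_left (add_one_le_exp _) (exp_pos a).le
    _ = exp b := by rw [← exp_add, add_sub_cancel]

theorem Real.exp_mul_one_div_mul_log {θ y : ℝ} (hθ : θ ≠ 0) (hy : 0 < y) :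
    exp (θ * ((1 / θ) * log y)) = y := by
  rw [← mul_assoc, mul_one_div_cancel hθ, one_mul, exp_log hy]

theorem Real.one_div_mul_log_lt_one_div_mul_log_iff {θ x y : ℝ} (hθ : 0 < θ) (hx : 0 < x)
    (hy : 0 < y) : (1 / θ) * log x < (1 / θ) * log y ↔ x < y := by
  rw [mul_lt_mul_iff_right₀ (one_div_pos.2 hθ), log_lt_log_iff hx hy]

theorem BGL_cost_dominated_case_general (θ η V ξ Q Eb : ℝ)
    (hθ : 0 < θ) (hη : 0 < η) (hV : 0 < V) (hξ : 0 < ξ) (hQ : 0 < Q) (hEb : 0 ≤ Eb)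
    (F : ℝ → ℝ)
    (hF : F = fun R : ℝ => V * ξ * max (η * (Real.exp (θ * R) - 1) - Eb) 0 - Q * R)
    (Rth : ℝ) (hRth : Rth = (1 / θ) * Real.log (Eb / η + 1))
    (Rs : ℝ) (hRs : Rs = (1 / θ) * Real.log (Q / (θ * V * η * ξ)))
    (h1 : Rs < Rth) :
    (∀ R ∈ Set.Icc (0 : ℝ) Q, F Rth ≤ F R) ∧ F Rth = -(Q * Rth) := by
  have hy : 0 < Eb / η + 1 := by positivity
  have hexp : exp (θ * Rth) = Eb / η + 1 := hRth ▸ exp_mul_one_div_mul_log hθ.ne' hy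
  have hkink : η * (exp (θ * Rth) - 1) - Eb = 0 := by
    rw [hexp]; field_simp; ring
  have hslope : Q ≤ V * ξ * (θ * (Eb + η)) := by
    rw [hRs, hRth, one_div_mul_log_lt_one_div_mul_log_iff hθ (by positivity) hy,
      div_lt_iff₀ (by positivity)] at h1
    have : θ * V * η * ξ * (Eb / η + 1) = V * ξ * (θ * (Eb + η)) := by field_simp
    linarith
  have htangent (R : ℝ) : θ * (Eb + η) * (R - Rth) ≤ η * (exp (θ * R) - 1) - Eb := by
    have h := mul_le_mul_of_nonneg_left (exp_mul_sub_add_one_le_exp (θ * Rth) (θ * R)) hη.le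
    rw [hexp] at h
    have : η * ((Eb / η + 1) * (θ * R - θ * Rth + 1)) = (Eb + η) * (θ * R - θ * Rth + 1) := by
      field_simp
    linarith
  subst hF
  refine ⟨fun R _ => ?_, by simp [hkink]⟩
  simpa [hkink] using
    neg_mul_le_mul_max_sub_mul (by positivity) hQ.le hslope (htangent R)

/-- Cost-dominated case of the BGL rate rule: if `R_s < R_th < Q`, then `R_th`
minimizes `F` over `[0, Q]`, with `F(R_th) = -Q·R_th`. -/
theorem BGL_cost_dominated_case (θ η V ξ Q Eb : ℝ)
    (hθ : 0 < θ) (hη : 0 < η) (hV : 0 < V) (hξ : 0 < ξ) (hQ : 0 < Q) (hEb : 0 ≤ Eb)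
    (F : ℝ → ℝ)
    (hF : F = fun R : ℝ => V * ξ * max (η * (Real.exp (θ * R) - 1) - Eb) 0 - Q * R)
    (Rth : ℝ) (hRth : Rth = (1 / θ) * Real.log (Eb / η + 1))
    (Rs : ℝ) (hRs : Rs = (1 / θ) * Real.log (Q / (θ * V * η * ξ)))
    (h1 : Rs < Rth) (h2 : Rth < Q) :
    (∀ R ∈ Set.Icc (0 : ℝ) Q, F Rth ≤ F R) ∧ F Rth = -(Q * Rth) :=
  BGL_cost_dominated_case_general θ η V ξ Q Eb hθ hη hV hξ hQ hEb F hF Rth hRth Rs hRs h1
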